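/- arXiv:2602.09293 — 5 statements merged into one kernel-verified Lean document; each statement's English description precedes it below -/
import Mathlib

section
/- Let a = (a1, a2, a3, a4) ∈ ℝ⁴ with a2 - a1 = a4 - a3 > 0, and let m be a positive integer. Define the 4×4 matrix M_m(a,c) with rows: (m²(a1-c)-1, 1, 1, -1), (-1, m²(a2-c)+1, 1, -1), (1, -1, m²(a3-c)-1, 1), (1, -1, -1, m²(a4-c)+1). Then det M_m(a,c) = m⁸(a1-c)(a2-c)(a3-c)(a4-c) + m⁶[ -(a2-c)(a3-c)(a4-c) + (a1-c)(a3-c)(a4-c) - (a1-c)(a2-c)(a4-c) + (a1-c)(a2-c)(a3-c) ]. -/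
/-!
`M_m(a,c)` is the diagonal matrix `m² · diag(a₁ - c, a₂ - c, a₃ - c, a₄ - c)` plus the rank-one
matrix `u vᵀ` with `u = (1, 1, -1, -1)` and `v = (-1, 1, 1, -1)`. By the matrix determinant lemma
`det (D + u vᵀ) = det D + vᵀ adj(D) u`, the determinant is `∏ dᵢ + ∑ uᵢ vᵢ ∏_{j ≠ i} dⱼ`: the
`m⁸` term is `det D` and the `m⁶` terms carry the signs `uᵢ vᵢ = -1, 1, -1, 1`.
-/

namespace Matrix

open Polynomial

variable {n R : Type*} [Fintype n] [DecidableEq n] [CommRing R]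

theorem det_scalar_add_vecMulVec (c : R) (u v : n → R) :
    (scalar n c + vecMulVec u v).det =
      c ^ Fintype.card n + (v ⬝ᵥ u) * c ^ (Fintype.card n - 1) := by
  have h := eval_charpoly (vecMulVec (-u) v) c
  rw [charpoly_vecMulVec, neg_vecMulVec, sub_neg_eq_add] at h
  rw [← h]
  simp [dotProduct_comm]

/-- Multiplying by `adjugate A` turns `A + u vᵀ` into `det A • 1 + (adjugate A u) vᵀ`, whose
determinant is `det A ^ (card n - 1) * (det A + v ⬝ᵥ adjugate A u)`. -/
theorem det_add_vecMulVec_of_isRegular {A : Matrix n n R} (hA : IsRegular A.det) (u v : n → R) :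
    (A + vecMulVec u v).det = A.det + v ⬝ᵥ (adjugate A *ᵥ u) := by
  cases isEmpty_or_nonempty n
  · simp [dotProduct]
  obtain ⟨k, hk⟩ : ∃ k, Fintype.card n = k + 1 := Nat.exists_eq_add_one.mpr Fintype.card_pos
  have hmul : adjugate A * (A + vecMulVec u v) =
      scalar n A.det + vecMulVec (adjugate A *ᵥ u) v := by
    rw [Matrix.mul_add, adjugate_mul, mul_vecMulVec, smul_one_eq_diagonal]
    rfl
  have hdet := congrArg det hmul
  rw [det_mul, det_adjugate, det_scalar_add_vecMulVec, hk, Nat.add_sub_cancel, pow_succ] at hdet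
  refine (hA.pow k).left ?_
  simp only [hdet]
  ring

/-- The regular case applies to `X • 1 + A` over `R[X]`, whose determinant is monic; evaluating
at `X = 0` recovers `A`. -/
theorem det_add_vecMulVec (A : Matrix n n R) (u v : n → R) :
    (A + vecMulVec u v).det = A.det + v ⬝ᵥ (adjugate A *ᵥ u) := by
  let A' : Matrix n n R[X] := (X : R[X]) • (1 : Matrix n n R[X]) + A.map C
  have hA' : IsRegular A'.det := Monic.isRegular (leadingCoeff_det_X_one_add_C A)
  let ev := evalRingHom (0 : R)
  have hev_A' : ev.mapMatrix A' = A := by ext; simp [ev, A']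
  have hev_C (w : n → R) : ev ∘ (C ∘ w) = w := funext fun _ => eval_C
  have hev_vecMulVec : ev.mapMatrix (vecMulVec (C ∘ u) (C ∘ v)) = vecMulVec u v := by
    ext; simp [ev, vecMulVec]
  have hev_adj : ev ∘ (adjugate A' *ᵥ C ∘ u) = adjugate A *ᵥ u := by
    funext i
    rw [Function.comp_apply, RingHom.map_mulVec, ← RingHom.mapMatrix_apply, RingHom.map_adjugate,
      hev_A', hev_C]
  have h := congrArg ev (det_add_vecMulVec_of_isRegular hA' (C ∘ u) (C ∘ v))
  rwa [RingHom.map_det, map_add ev.mapMatrix A', map_add ev, RingHom.map_det,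
    RingHom.map_dotProduct, hev_A', hev_vecMulVec, hev_C, hev_adj] at h

theorem det_diagonal_add_vecMulVec (d u v : n → R) :
    (diagonal d + vecMulVec u v).det =
      ∏ i, d i + ∑ i, u i * v i * ∏ j ∈ Finset.univ.erase i, d j := by
  rw [det_add_vecMulVec, det_diagonal, adjugate_diagonal, dotProduct]
  congr 1
  refine Finset.sum_congr rfl fun i _ => ?_
  rw [mulVec_diagonal]
  ring

end Matrix

theorem Fin.prod_univ_erase {M : Type*} [CommMonoid M] {n : ℕ} (f : Fin (n + 1) → M)
    (x : Fin (n + 1)) : ∏ j ∈ Finset.univ.erase x, f j = ∏ j : Fin n, f (x.succAbove j) := by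
  rw [Fin.univ_succAbove n x, Finset.erase_cons, Finset.prod_map, Fin.coe_succAboveEmb]

theorem stmt_2_general (a1 a2 a3 a4 c : ℝ)
    (m : ℕ) :
    Matrix.det
      !![(m : ℝ)^2 * (a1 - c) - 1, 1, 1, -1;
         -1, (m : ℝ)^2 * (a2 - c) + 1, 1, -1;
         1, -1, (m : ℝ)^2 * (a3 - c) - 1, 1;
         1, -1, -1, (m : ℝ)^2 * (a4 - c) + 1]
    = (m : ℝ)^8 * (a1 - c) * (a2 - c) * (a3 - c) * (a4 - c)
      + (m : ℝ)^6 *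
        ( -((a2 - c) * (a3 - c) * (a4 - c))
          + (a1 - c) * (a3 - c) * (a4 - c)
          - (a1 - c) * (a2 - c) * (a4 - c)
          + (a1 - c) * (a2 - c) * (a3 - c) ) := by
  calc _ = (Matrix.diagonal ((m : ℝ) ^ 2 • ![a1 - c, a2 - c, a3 - c, a4 - c]) +
          Matrix.vecMulVec ![1, 1, -1, -1] ![-1, 1, 1, -1]).det := by
        congr 1
        ext i j
        fin_cases i <;> fin_cases j <;> simp [Matrix.vecMulVec, sub_eq_add_neg]
    _ = _ := by
        rw [Matrix.det_diagonal_add_vecMulVec]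
        simp only [Fin.sum_univ_four, Fin.prod_univ_four, Fin.prod_univ_erase, Fin.prod_univ_three,
          Fin.succAbove, Fin.reduceCastSucc, Fin.reduceSucc, Fin.reduceLT, ↓reduceIte,
          Pi.smul_apply, smul_eq_mul, Matrix.cons_val]
        ring

theorem stmt_2 (a1 a2 a3 a4 c : ℝ) (heq : a2 - a1 = a4 - a3) (hpos : 0 < a2 - a1)
    (m : ℕ) (hm : 0 < m) :
    Matrix.det
      !![(m : ℝ)^2 * (a1 - c) - 1, 1, 1, -1;
         -1, (m : ℝ)^2 * (a2 - c) + 1, 1, -1;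
         1, -1, (m : ℝ)^2 * (a3 - c) - 1, 1;
         1, -1, -1, (m : ℝ)^2 * (a4 - c) + 1]
    = (m : ℝ)^8 * (a1 - c) * (a2 - c) * (a3 - c) * (a4 - c)
      + (m : ℝ)^6 *
        ( -((a2 - c) * (a3 - c) * (a4 - c))
          + (a1 - c) * (a3 - c) * (a4 - c)
          - (a1 - c) * (a2 - c) * (a4 - c)
          + (a1 - c) * (a2 - c) * (a3 - c) ) :=
  stmt_2_general a1 a2 a3 a4 c m
end

section
/- Let a = (a1, a2, a3, a4) ∈ ℝ⁴ and m a positive integer, and let M_m(a,c) be the matrix with rows (m²(a1-c)-1, 1, 1, -1), (-1, m²(a2-c)+1, 1, -1), (1, -1, m²(a3-c)-1, 1), (1, -1, -1, m²(a4-c)+1). If c ∉ {a1, a2, a3, a4}, then det M_m(a,c) = m⁶ (c-a1)(c-a2)(c-a3)(c-a4) [ m² - ( -1/(c-a1) + 1/(c-a2) - 1/(c-a3) + 1/(c-a4) ) ]. Consequently, for such c, det M_m(a,c) = 0 if and only if m² = -1/(c-a1) + 1/(c-a2) - 1/(c-a3) + 1/(c-a4). -/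
/-!
`M_m(a,c)` is the diagonal matrix `D = diag (m² (aᵢ - c))` plus the rank-one matrix `u vᵀ` with
`u = (1, 1, -1, -1)` and `v = (-1, 1, 1, -1)`. The matrix determinant lemma
`det (D + u vᵀ) = det D · (1 + ∑ uᵢ vᵢ / dᵢ)`, with `uᵢ vᵢ = ∓1`, is the factorization; dividing
out the nonzero prefactor gives the dispersion relation.
-/

open Matrix

theorem Matrix.det_diagonal_add_vecMulVec_s3 {n K : Type*} [Fintype n] [DecidableEq n] [Field K]
    {d : n → K} (hd : ∀ i, d i ≠ 0) (u v : n → K) :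
    (diagonal d + vecMulVec u v).det = (∏ i, d i) * (1 + ∑ i, u i * v i / d i) := by
  have hA : IsUnit (diagonal d).det := by
    rw [det_diagonal]
    exact (Finset.prod_ne_zero_iff.mpr fun i _ => hd i).isUnit
  have hinv : (diagonal d)⁻¹ = diagonal d⁻¹ :=
    inv_eq_left_inv <| by rw [diagonal_mul_diagonal, ← diagonal_one]; congr; ext i; simp [hd i]
  rw [vecMulVec_eq Unit, det_add_replicateCol_mul_replicateRow hA, det_diagonal, hinv, det_unique]
  simp only [PUnit.default_eq_unit, add_apply, one_apply_eq, mul_apply, replicateRow_apply,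
    diagonal_apply, Pi.inv_apply, mul_ite, mul_zero, Finset.sum_ite_eq', Finset.mem_univ,
    ↓reduceIte, replicateCol_apply]
  congr 2
  exact Finset.sum_congr rfl fun i _ => by ring

section ModeMatrix

variable {K : Type*} [Field K]

theorem modeMatrix_eq_diagonal_add_vecMulVec (k a1 a2 a3 a4 c : K) :
    !![k * (a1 - c) - 1, 1, 1, -1;
       -1, k * (a2 - c) + 1, 1, -1;
       1, -1, k * (a3 - c) - 1, 1;
       1, -1, -1, k * (a4 - c) + 1] =
      diagonal ![k * (a1 - c), k * (a2 - c), k * (a3 - c), k * (a4 - c)] +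
        vecMulVec ![1, 1, -1, -1] ![-1, 1, 1, -1] := by
  ext i j
  fin_cases i <;> fin_cases j <;> simp <;> ring

theorem det_modeMatrix {k a1 a2 a3 a4 c : K} (hk : k ≠ 0)
    (h1 : c ≠ a1) (h2 : c ≠ a2) (h3 : c ≠ a3) (h4 : c ≠ a4) :
    !![k * (a1 - c) - 1, 1, 1, -1;
       -1, k * (a2 - c) + 1, 1, -1;
       1, -1, k * (a3 - c) - 1, 1;
       1, -1, -1, k * (a4 - c) + 1].det =
      k ^ 3 * (c - a1) * (c - a2) * (c - a3) * (c - a4) *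
        (k - (-(1 / (c - a1)) + 1 / (c - a2) - 1 / (c - a3) + 1 / (c - a4))) := by
  have d1 := sub_ne_zero.mpr h1.symm
  have d2 := sub_ne_zero.mpr h2.symm
  have d3 := sub_ne_zero.mpr h3.symm
  have d4 := sub_ne_zero.mpr h4.symm
  have hd : ∀ i, ![k * (a1 - c), k * (a2 - c), k * (a3 - c), k * (a4 - c)] i ≠ 0 := by
    intro i
    fin_cases i <;> simp [hk, d1, d2, d3, d4]
  rw [modeMatrix_eq_diagonal_add_vecMulVec, det_diagonal_add_vecMulVec_s3 hd]
  simp only [Fin.prod_univ_four, Fin.sum_univ_four, cons_val_zero, cons_val_one, cons_val,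
    mul_neg, mul_one, neg_neg]
  field_simp
  ring

end ModeMatrix

theorem stmt_3 (a1 a2 a3 a4 c : ℝ) (m : ℕ) (hm : 0 < m)
    (h1 : c ≠ a1) (h2 : c ≠ a2) (h3 : c ≠ a3) (h4 : c ≠ a4) :
    Matrix.det
      !![(m : ℝ)^2 * (a1 - c) - 1, 1, 1, -1;
         -1, (m : ℝ)^2 * (a2 - c) + 1, 1, -1;
         1, -1, (m : ℝ)^2 * (a3 - c) - 1, 1;
         1, -1, -1, (m : ℝ)^2 * (a4 - c) + 1]
      = (m : ℝ)^6 * (c - a1) * (c - a2) * (c - a3) * (c - a4) *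
        ((m : ℝ)^2 - (-(1 / (c - a1)) + 1 / (c - a2) - 1 / (c - a3) + 1 / (c - a4)))
    ∧ (Matrix.det
      !![(m : ℝ)^2 * (a1 - c) - 1, 1, 1, -1;
         -1, (m : ℝ)^2 * (a2 - c) + 1, 1, -1;
         1, -1, (m : ℝ)^2 * (a3 - c) - 1, 1;
         1, -1, -1, (m : ℝ)^2 * (a4 - c) + 1] = 0
      ↔ (m : ℝ)^2 = -(1 / (c - a1)) + 1 / (c - a2) - 1 / (c - a3) + 1 / (c - a4)) := by
  have hk : (m : ℝ) ^ 2 ≠ 0 := by positivity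
  have hdet := det_modeMatrix hk h1 h2 h3 h4
  rw [← pow_mul] at hdet
  have hprefactor : (m : ℝ) ^ 6 * (c - a1) * (c - a2) * (c - a3) * (c - a4) ≠ 0 := by
    simp [sub_eq_zero, hm.ne', h1, h2, h3, h4]
  refine ⟨hdet, ?_⟩
  rw [hdet, mul_eq_zero, or_iff_right hprefactor, sub_eq_zero]
end

section
/- Let a = (a1, a2, a3, a4) ∈ ℝ⁴ with a2 - a1 = a4 - a3 = Δa > 0, and suppose the four components of a are pairwise distinct. For each positive integer m, let P_m(c) be the monic degree-4 polynomial m⁻⁸·det M_m(a,c) (in the variable c). Then P_m converges coefficientwise, as m → ∞, to the polynomial P(c) = (a1-c)(a2-c)(a3-c)(a4-c), which has four simple real roots. -/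
/-!
The constant part of `M_m` is the rank-one matrix `u vᵀ` with `u = (1, 1, -1, -1)` and
`v = (-1, 1, 1, -1)`, so by the matrix determinant lemma `det M_m = m⁸ P + m⁶ R` with
`R = Σᵢ uᵢ vᵢ ∏_{j ≠ i} (aⱼ - c)`. Hence `P_m = P + m⁻² R → P` coefficientwise, and
`P` has the four distinct roots `a₁, …, a₄`.
-/

open Polynomial Filter Topology

theorem det_linearization {R : Type*} [CommRing R] (t x₁ x₂ x₃ x₄ : R) :
    !![t * x₁ - 1, 1, 1, -1;
       -1, t * x₂ + 1, 1, -1;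
       1, -1, t * x₃ - 1, 1;
       1, -1, -1, t * x₄ + 1].det =
      t ^ 4 * (x₁ * x₂ * x₃ * x₄) +
        t ^ 3 * (x₁ * x₂ * x₃ - x₁ * x₂ * x₄ + x₁ * x₃ * x₄ - x₂ * x₃ * x₄) := by
  simp [Matrix.det_succ_row_zero, Fin.sum_univ_succ, Fin.succAbove]
  ring

theorem tendsto_coeff_add_C_mul {α K : Type*} [NormedRing K] {l : Filter α} {ε : α → K}
    (hε : Tendsto ε l (𝓝 0)) (P Q : K[X]) (k : ℕ) :
    Tendsto (fun i => (P + C (ε i) * Q).coeff k) l (𝓝 (P.coeff k)) := by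
  simpa [coeff_C_mul] using tendsto_const_nhds.add (hε.mul_const (Q.coeff k))

theorem stmt_8_general (a1 a2 a3 a4 : ℝ)
    (hd12 : a1 ≠ a2) (hd13 : a1 ≠ a3) (hd14 : a1 ≠ a4)
    (hd23 : a2 ≠ a3) (hd24 : a2 ≠ a4) (hd34 : a3 ≠ a4) :
    let M : ℕ → Matrix (Fin 4) (Fin 4) (Polynomial ℝ) := fun m =>
      !![C ((m : ℝ)^2) * (C a1 - X) - 1, 1, 1, -1;
         -1, C ((m : ℝ)^2) * (C a2 - X) + 1, 1, -1;
         1, -1, C ((m : ℝ)^2) * (C a3 - X) - 1, 1;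
         1, -1, -1, C ((m : ℝ)^2) * (C a4 - X) + 1]
    let Pm : ℕ → Polynomial ℝ := fun m => C (((m : ℝ)^8)⁻¹) * (M m).det
    let P : Polynomial ℝ := (C a1 - X) * (C a2 - X) * (C a3 - X) * (C a4 - X)
    (∀ k : ℕ, Tendsto (fun m : ℕ => (Pm m).coeff k) atTop (𝓝 (P.coeff k))) ∧
    P.roots = {a1, a2, a3, a4} ∧
    Multiset.card P.roots = 4 ∧ P.roots.toFinset.card = 4 := by
  intro M Pm P
  set x : ℝ → ℝ[X] := fun a => C a - X
  set R := x a1 * x a2 * x a3 - x a1 * x a2 * x a4 + x a1 * x a3 * x a4 - x a2 * x a3 * x a4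
  have hPm : ∀ m : ℕ, 1 ≤ m → Pm m = P + C (((m : ℝ) ^ 2)⁻¹) * R := by
    intro m hm
    have hm0 : (m : ℝ) ≠ 0 := by positivity
    have h8 : ((m : ℝ) ^ 8)⁻¹ * ((m : ℝ) ^ 2) ^ 4 = 1 := by field_simp
    have h6 : ((m : ℝ) ^ 8)⁻¹ * ((m : ℝ) ^ 2) ^ 3 = ((m : ℝ) ^ 2)⁻¹ := by field_simp
    simp only [Pm, M, det_linearization, ← C_pow, mul_add, ← mul_assoc, ← C_mul, h8, h6, C_1,
      one_mul]
    rfl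
  have hP : P = (({a1, a2, a3, a4} : Multiset ℝ).map fun a => X - C a).prod := by
    simp only [P, Multiset.insert_eq_cons, Multiset.map_cons, Multiset.prod_cons,
      Multiset.map_singleton, Multiset.prod_singleton]
    ring
  have hroots : P.roots = {a1, a2, a3, a4} := hP ▸ roots_multiset_prod_X_sub_C _
  refine ⟨fun k => ?_, hroots, by rw [hroots]; rfl, ?_⟩
  · have hε : Tendsto (fun m : ℕ => ((m : ℝ) ^ 2)⁻¹) atTop (𝓝 0) :=
      ((tendsto_pow_atTop two_ne_zero).comp tendsto_natCast_atTop_atTop).inv_tendsto_atTop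
    refine (tendsto_coeff_add_C_mul hε P R k).congr' ?_
    filter_upwards [eventually_ge_atTop 1] with m hm
    rw [hPm m hm]
  · rw [hroots]
    simp [Finset.card_insert_of_notMem, hd12, hd13, hd14, hd23, hd24, hd34]

theorem stmt_8 (a1 a2 a3 a4 : ℝ) (heq : a2 - a1 = a4 - a3) (hpos : 0 < a2 - a1)
    (hd12 : a1 ≠ a2) (hd13 : a1 ≠ a3) (hd14 : a1 ≠ a4)
    (hd23 : a2 ≠ a3) (hd24 : a2 ≠ a4) (hd34 : a3 ≠ a4) :
    let M : ℕ → Matrix (Fin 4) (Fin 4) (Polynomial ℝ) := fun m =>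
      !![C ((m : ℝ)^2) * (C a1 - X) - 1, 1, 1, -1;
         -1, C ((m : ℝ)^2) * (C a2 - X) + 1, 1, -1;
         1, -1, C ((m : ℝ)^2) * (C a3 - X) - 1, 1;
         1, -1, -1, C ((m : ℝ)^2) * (C a4 - X) + 1]
    let Pm : ℕ → Polynomial ℝ := fun m => C (((m : ℝ)^8)⁻¹) * (M m).det
    let P : Polynomial ℝ := (C a1 - X) * (C a2 - X) * (C a3 - X) * (C a4 - X)
    (∀ k : ℕ, Tendsto (fun m : ℕ => (Pm m).coeff k) atTop (𝓝 (P.coeff k))) ∧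
    P.roots = {a1, a2, a3, a4} ∧
    Multiset.card P.roots = 4 ∧ P.roots.toFinset.card = 4 :=
  stmt_8_general a1 a2 a3 a4 hd12 hd13 hd14 hd23 hd24 hd34
end

section
/- Let a = (a1, a2, a3, a4) with a1 = a3, a2 = a4 (symmetric case) and Δa = a2 - a1 > 0. Then for any positive integer m, det M_m(a,c) = m⁶(c-a1)(c-a2)·Q(c) where Q(c) = m²c² - m²(a1+a2)c + m²a1a2 - 2(a2-a1). In particular, the set of c with det M_m(a,c) = 0 is exactly {a1, a2, c⁻_m(a1,a2), c⁺_m(a1,a2)} where c±_m(a1,a2) = (a1+a2)/2 ± (1/2)√((a2-a1)² + 8Δa/m²), and these four values are pairwise distinct. -/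
/-!
With `x = m²(a1 - c)` and `y = m²(a2 - c)` the determinant is `x y (x y + 2 (x - y))`, and
`x y + 2 (x - y) = m² ((c - a1)(c - a2) - 2Δa/m²)`. Completing the square, the roots `c±` of this
last factor satisfy `c⁻ < a1 < a2 < c⁺`, because the discriminant `(a2 - a1)² + 8Δa/m²` exceeds
`(a2 - a1)²`.
-/

theorem det_symm_linearization {R : Type*} [CommRing R] (x y : R) :
    Matrix.det !![x - 1, 1, 1, -1; -1, y + 1, 1, -1; 1, -1, x - 1, 1; 1, -1, -1, y + 1] =
      x * y * (x * y + 2 * (x - y)) := by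
  rw [Matrix.det_succ_row_zero]
  simp [Fin.sum_univ_four, Matrix.det_fin_three, Fin.succAbove]
  ring

section Roots

variable {a1 a2 e s : ℝ}

theorem sub_mul_sub_sub_eq_of_sq_eq (hs : s ^ 2 = (a2 - a1) ^ 2 + 4 * e) (c : ℝ) :
    (c - a1) * (c - a2) - e =
      (c - ((a1 + a2) / 2 - s / 2)) * (c - ((a1 + a2) / 2 + s / 2)) := by
  linear_combination (1 / 4 : ℝ) * hs

theorem sub_half_lt_left_and_right_lt_add_half (he : 0 < e) (hs0 : 0 ≤ s)
    (hs : s ^ 2 = (a2 - a1) ^ 2 + 4 * e) :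
    (a1 + a2) / 2 - s / 2 < a1 ∧ a2 < (a1 + a2) / 2 + s / 2 := by
  have hlt : a2 - a1 < s := by nlinarith
  constructor <;> linarith

end Roots

theorem stmt_10 (a1 a2 : ℝ) (hpos : 0 < a2 - a1) (m : ℕ) (hm : 0 < m) :
    let Δa : ℝ := a2 - a1
    let Mdet : ℝ → ℝ := fun c => Matrix.det
      !![(m : ℝ)^2 * (a1 - c) - 1, 1, 1, -1;
         -1, (m : ℝ)^2 * (a2 - c) + 1, 1, -1;
         1, -1, (m : ℝ)^2 * (a1 - c) - 1, 1;
         1, -1, -1, (m : ℝ)^2 * (a2 - c) + 1]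
    let Q : ℝ → ℝ := fun c =>
      (m : ℝ)^2 * c^2 - (m : ℝ)^2 * (a1 + a2) * c + (m : ℝ)^2 * a1 * a2 - 2 * (a2 - a1)
    let cplus : ℝ := (a1 + a2) / 2 + Real.sqrt ((a2 - a1)^2 + 8 * Δa / (m : ℝ)^2) / 2
    let cminus : ℝ := (a1 + a2) / 2 - Real.sqrt ((a2 - a1)^2 + 8 * Δa / (m : ℝ)^2) / 2
    (∀ c : ℝ, Mdet c = (m : ℝ)^6 * (c - a1) * (c - a2) * Q c) ∧
    {c : ℝ | Mdet c = 0} = {a1, a2, cminus, cplus} ∧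
    (a1 ≠ a2 ∧ a1 ≠ cminus ∧ a1 ≠ cplus ∧ a2 ≠ cminus ∧ a2 ≠ cplus ∧ cminus ≠ cplus) := by
  intro Δa Mdet Q cplus cminus
  have he : 0 < 2 * Δa / (m : ℝ) ^ 2 := by positivity
  have hs : √((a2 - a1) ^ 2 + 8 * Δa / (m : ℝ) ^ 2) ^ 2 =
      (a2 - a1) ^ 2 + 4 * (2 * Δa / (m : ℝ) ^ 2) := by
    rw [Real.sq_sqrt (by positivity)]; ring
  have hdet (c : ℝ) : Mdet c = (m : ℝ) ^ 6 * (c - a1) * (c - a2) * Q c := by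
    simp only [Mdet, Q, det_symm_linearization]; ring
  have hQ (c : ℝ) : Q c = (m : ℝ) ^ 2 * (c - cminus) * (c - cplus) := by
    rw [mul_assoc, ← sub_mul_sub_sub_eq_of_sq_eq hs]; field_simp; ring
  have h12 : a1 < a2 := sub_pos.mp hpos
  obtain ⟨hminus, hplus⟩ : cminus < a1 ∧ a2 < cplus :=
    sub_half_lt_left_and_right_lt_add_half he (Real.sqrt_nonneg _) hs
  refine ⟨hdet, ?_, h12.ne, hminus.ne', (h12.trans hplus).ne, (hminus.trans h12).ne', hplus.ne,
    (hminus.trans (h12.trans hplus)).ne⟩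
  ext c
  simp only [Set.mem_ofPred_eq, Set.mem_insert_iff, Set.mem_singleton_iff, hdet, hQ, mul_eq_zero,
    pow_eq_zero_iff, ne_eq, OfNat.ofNat_ne_zero, not_false_eq_true, Nat.cast_eq_zero, hm.ne',
    sub_eq_zero, false_or, or_assoc]
end

section
/- Let a = (a1, a2, a3, a4) with a2 - a1 = a4 - a3 = Δa > 0 and a1 = a4 (successive case), so |a3 - a2| = 2Δa. Then for any positive integer m, det M_m(a,c) = m⁶(c - a1)²·Q̃(c), where Q̃(c) = m²c² - m²(a2 + a3)c + m²a2a3 - 2Δa. In particular, the roots of det M_m(a,·) are a1 (a double root) and the two simple real roots c±_m = (a2+a3)/2 ± (1/2)√((a3-a2)² + 8Δa/m²), equivalently (a2+a3)/2 ± √(Δa² + 2Δa/m²). -/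
set_option maxHeartbeats 1000000 in


theorem stmt_11 (a1 a2 a3 a4 : ℝ) (heq : a2 - a1 = a4 - a3) (hpos : 0 < a2 - a1)
    (hsuc : a1 = a4) (m : ℕ) (hm : 0 < m) :
    let Δa : ℝ := a2 - a1
    let Mdet : ℝ → ℝ := fun c => Matrix.det
      !![(m : ℝ)^2 * (a1 - c) - 1, 1, 1, -1;
         -1, (m : ℝ)^2 * (a2 - c) + 1, 1, -1;
         1, -1, (m : ℝ)^2 * (a3 - c) - 1, 1;
         1, -1, -1, (m : ℝ)^2 * (a4 - c) + 1]
    let Qt : ℝ → ℝ := fun c =>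
      (m : ℝ)^2 * c^2 - (m : ℝ)^2 * (a2 + a3) * c + (m : ℝ)^2 * a2 * a3 - 2 * Δa
    let cplus : ℝ := (a2 + a3) / 2 + Real.sqrt (Δa^2 + 2 * Δa / (m : ℝ)^2)
    let cminus : ℝ := (a2 + a3) / 2 - Real.sqrt (Δa^2 + 2 * Δa / (m : ℝ)^2)
    |a3 - a2| = 2 * Δa ∧
    (∀ c : ℝ, Mdet c = (m : ℝ)^6 * (c - a1)^2 * Qt c) ∧
    {c : ℝ | Mdet c = 0} = {a1, cminus, cplus} ∧
    (a1 ≠ cminus ∧ a1 ≠ cplus ∧ cminus ≠ cplus) ∧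
    Real.sqrt ((a3 - a2)^2 + 8 * Δa / (m : ℝ)^2) / 2
      = Real.sqrt (Δa^2 + 2 * Δa / (m : ℝ)^2) := by
  intro Δa Mdet Qt cplus cminus
  have ha3 : a3 = 2 * a1 - a2 := by linarith
  have hm2 : (0:ℝ) < (m:ℝ)^2 := by positivity
  have harg : (0:ℝ) < Δa^2 + 2 * Δa / (m:ℝ)^2 := by
    have : 0 < 2 * Δa / (m:ℝ)^2 := by positivity
    positivity
  set S := Real.sqrt (Δa^2 + 2 * Δa / (m:ℝ)^2) with hSdef
  have hSpos : 0 < S := Real.sqrt_pos.mpr harg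
  have hSsq : S^2 = Δa^2 + 2 * Δa / (m:ℝ)^2 := Real.sq_sqrt harg.le
  have hSsq' : (m:ℝ)^2 * S^2 = (m:ℝ)^2 * Δa^2 + 2 * Δa := by
    rw [hSsq, mul_add, mul_comm ((m:ℝ)^2) (2 * Δa / (m:ℝ)^2), div_mul_cancel₀ _ hm2.ne']
  have hfac : ∀ c : ℝ, Mdet c = (m : ℝ)^6 * (c - a1)^2 * Qt c := by
    intro c
    show Matrix.det _ = (m:ℝ)^6 * (c - a1)^2 * ((m : ℝ)^2 * c^2
      - (m : ℝ)^2 * (a2 + a3) * c + (m : ℝ)^2 * a2 * a3 - 2 * (a2 - a1))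
    rw [ha3, ← hsuc]
    simp [Matrix.det_succ_row_zero, Fin.sum_univ_succ, Fin.succAbove, Fin.lt_def,
      Fin.castSucc, Fin.castAdd, Fin.castLE, -Fin.val_fin_lt, -Fin.lt_def]
    ring
  have hQt : ∀ c : ℝ, Qt c = (m:ℝ)^2 * (c - cminus) * (c - cplus) := by
    intro c
    show (m : ℝ)^2 * c^2 - (m : ℝ)^2 * (a2 + a3) * c + (m : ℝ)^2 * a2 * a3 - 2 * (a2 - a1)
      = (m:ℝ)^2 * (c - ((a2 + a3) / 2 - S)) * (c - ((a2 + a3) / 2 + S))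
    rw [ha3]
    linear_combination hSsq'
  refine ⟨?_, hfac, ?_, ⟨?_, ?_, ?_⟩, ?_⟩
  · show |a3 - a2| = 2 * (a2 - a1)
    rw [ha3, abs_of_nonpos (by linarith)]; ring
  · ext c
    simp only [Set.mem_setOf_eq, Set.mem_insert_iff, Set.mem_singleton_iff]
    rw [hfac c, hQt c]
    have h6 : ((m:ℝ)^6) ≠ 0 := by positivity
    have h2 : ((m:ℝ)^2) ≠ 0 := hm2.ne'
    rw [mul_assoc, mul_eq_zero, mul_eq_zero, mul_eq_zero, mul_eq_zero]
    simp only [h6, h2, false_or, sq_eq_zero_iff, sub_eq_zero]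
  · show a1 ≠ (a2 + a3) / 2 - S
    rw [ha3]; intro h; nlinarith
  · show a1 ≠ (a2 + a3) / 2 + S
    rw [ha3]; intro h; nlinarith
  · show (a2 + a3) / 2 - S ≠ (a2 + a3) / 2 + S
    intro h; nlinarith
  · have h4 : (a3 - a2)^2 + 8 * Δa / (m:ℝ)^2 = 4 * (Δa^2 + 2 * Δa / (m:ℝ)^2) := by
      show (a3 - a2)^2 + 8 * (a2-a1) / (m:ℝ)^2 = 4 * ((a2-a1)^2 + 2 * (a2-a1) / (m:ℝ)^2)
      rw [ha3]; ring
    rw [h4, Real.sqrt_mul (by norm_num : (0:ℝ) ≤ 4),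
      show Real.sqrt 4 = 2 by rw [show (4:ℝ) = 2^2 by norm_num, Real.sqrt_sq (by norm_num)]]
    ring
end
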